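/- Let P_ℓ denote the Legendre polynomials, defined by Rodrigues' formula P_ℓ(s) = (1/(2^ℓ·ℓ!))·(d/ds)^ℓ[ (s²−1)^ℓ ]. Then for every s ∈ (−1,1), the series Σ_{ℓ=0}^∞ P_ℓ(s) converges and its sum equals 1/√(2 − 2s). -/

import Mathlib

/-
Laplace's integral `P_ℓ(s) = (2π)⁻¹ ∫₀^{2π} z(φ)^ℓ dφ`, with `z(φ) = s + i√(1 - s²) cos φ`, follows
from Rodrigues' formula: `z(φ) = (β + iα e^{iφ})(β + iα e^{-iφ})` with `α² = (1 - s)/2`,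
`β² = (1 + s)/2`, and expanding both factors binomially leaves, by orthogonality of the `e^{ikφ}`,
the sum `Σ_k C(ℓ,k)² ((s-1)/2)^k ((s+1)/2)^{ℓ-k}` that the Leibniz rule gives for `P_ℓ(s)`.
Off the zeros of `sin` we have `|z| < 1`, and `Re (1 - z) = 1 - s > 0` everywhere, so the geometric
partial sums `Σ_{ℓ<N} z^ℓ` are bounded by `2/(1 - s)` and dominated convergence yields
`Σ P_ℓ(s) = (2π)⁻¹ ∫ Re (1 - z)⁻¹ = (2π)⁻¹ ∫ dφ / ((1 - s) + (1 + s) cos² φ) = 1/√(2 - 2s)`.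
-/

/-- The Legendre polynomial `P_ℓ`, defined by Rodrigues' formula
`P_ℓ(s) = (1/(2^ℓ ℓ!)) (d/ds)^ℓ [(s²−1)^ℓ]`. -/
noncomputable def legendreP (ℓ : ℕ) (s : ℝ) : ℝ :=
  (1 / (2 ^ ℓ * (Nat.factorial ℓ : ℝ))) * iteratedDeriv ℓ (fun x : ℝ => (x ^ 2 - 1) ^ ℓ) s

open Finset Filter Topology MeasureTheory intervalIntegral
open scoped Real
open Complex (I exp)

theorem iteratedDeriv_add_const_pow {𝕜 : Type*} [NontriviallyNormedField 𝕜] (a : 𝕜)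
    (m k : ℕ) (x : 𝕜) :
    iteratedDeriv k (fun y => (y + a) ^ m) x = m.descFactorial k * (x + a) ^ (m - k) := by
  rw [iteratedDeriv_comp_add_const k (· ^ m) a]
  simp

theorem legendreP_eq_sum_choose_sq (ℓ : ℕ) (s : ℝ) :
    legendreP ℓ s = ∑ k ∈ range (ℓ + 1),
      (ℓ.choose k : ℝ) ^ 2 * ((s - 1) / 2) ^ k * ((s + 1) / 2) ^ (ℓ - k) := by
  have hfactor : (fun x : ℝ => (x ^ 2 - 1) ^ ℓ) = fun x => (x + 1) ^ ℓ * (x + -1) ^ ℓ := by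
    funext x; rw [← mul_pow]; ring
  rw [legendreP, hfactor, iteratedDeriv_fun_mul (by fun_prop) (by fun_prop), mul_sum]
  refine sum_congr rfl fun k hk => ?_
  have hk : k ≤ ℓ := Nat.lt_succ_iff.mp (mem_range.mp hk)
  have hfact : (ℓ.choose k : ℝ) * k.factorial * (ℓ - k).factorial = ℓ.factorial := by
    exact_mod_cast Nat.choose_mul_factorial_mul_factorial hk
  rw [iteratedDeriv_add_const_pow, iteratedDeriv_add_const_pow, Nat.sub_sub_self hk,
    Nat.descFactorial_eq_factorial_mul_choose, Nat.descFactorial_eq_factorial_mul_choose,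
    Nat.choose_symm hk, div_pow, div_pow, ← sub_eq_add_neg]
  have h2 : (2 : ℝ) ^ ℓ = 2 ^ k * 2 ^ (ℓ - k) := by rw [← pow_add, Nat.add_sub_cancel' hk]
  rw [h2, ← hfact]
  push_cast
  field_simp

theorem integral_exp_pow_mul_exp_neg_pow (j k : ℕ) :
    ∫ φ in (0 : ℝ)..2 * π, exp (φ * I) ^ j * exp (-(φ * I)) ^ k =
      if j = k then (2 * π : ℂ) else 0 := by
  have hexp : ∀ φ : ℝ, exp (φ * I) ^ j * exp (-(φ * I)) ^ k = exp ((j - k) * I * φ) := by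
    intro φ
    rw [← Complex.exp_nat_mul, ← Complex.exp_nat_mul, ← Complex.exp_add]
    ring_nf
  simp_rw [hexp]
  split_ifs with hjk
  · simp [hjk]
  · have hc : ((j - k) * I : ℂ) ≠ 0 := by
      simpa [sub_eq_zero, Complex.I_ne_zero] using hjk
    have hperiod : exp ((j - k) * I * (2 * π)) = 1 := by
      rw [← Complex.exp_int_mul_two_pi_mul_I (j - k)]
      push_cast
      ring_nf
    rw [integral_exp_mul_complex hc]
    push_cast
    simp [hperiod]

theorem integral_sum_mul_exp_pow_mul_sum_mul_exp_neg_pow (n : ℕ) (c d : ℕ → ℂ) :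
    ∫ φ in (0 : ℝ)..2 * π, (∑ j ∈ range n, c j * exp (φ * I) ^ j) *
        (∑ k ∈ range n, d k * exp (-(φ * I)) ^ k) =
      2 * π * ∑ j ∈ range n, c j * d j := by
  have hcont : ∀ j k : ℕ,
      Continuous fun φ : ℝ => c j * d k * (exp (φ * I) ^ j * exp (-(φ * I)) ^ k) :=
    fun j k => by fun_prop
  simp_rw [sum_mul_sum, mul_mul_mul_comm]
  rw [integral_finsetSum fun j _ =>
    (continuous_finsetSum _ fun k _ => hcont j k).intervalIntegrable _ _, mul_sum]
  refine sum_congr rfl fun j hj => ?_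
  rw [integral_finsetSum fun k _ => (hcont j k).intervalIntegrable _ _]
  simp_rw [intervalIntegral.integral_const_mul, integral_exp_pow_mul_exp_neg_pow]
  rw [sum_eq_single_of_mem j hj fun k _ hkj => by simp [Ne.symm hkj], if_pos rfl]
  ring

theorem integral_add_mul_exp_mul_add_mul_exp_neg_pow (a b : ℂ) (ℓ : ℕ) :
    ∫ φ in (0 : ℝ)..2 * π, ((b + a * exp (φ * I)) * (b + a * exp (-(φ * I)))) ^ ℓ =
      2 * π * ∑ k ∈ range (ℓ + 1), (ℓ.choose k : ℂ) ^ 2 * (a ^ 2) ^ k * (b ^ 2) ^ (ℓ - k) := by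
  have hexpand : ∀ w : ℂ, (b + a * w) ^ ℓ =
      ∑ k ∈ range (ℓ + 1), a ^ k * b ^ (ℓ - k) * ℓ.choose k * w ^ k := by
    intro w
    rw [add_comm, add_pow]
    exact sum_congr rfl fun k _ => by ring
  simp_rw [mul_pow, hexpand, integral_sum_mul_exp_pow_mul_sum_mul_exp_neg_pow]
  congr 1
  exact sum_congr rfl fun k _ => by ring

theorem integral_one_div_add_mul_cos_sq {a b : ℝ} (ha : 0 < a) (hab : 0 < a + b) :
    ∫ φ in (0 : ℝ)..2 * π, 1 / (a + b * Real.cos φ ^ 2) = 2 * π / √(a * (a + b)) := by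
  set c := √(a * (a + b))
  have hc : 0 < c := Real.sqrt_pos.mpr (mul_pos ha hab)
  have hc2 : c ^ 2 = a * (a + b) := Real.sq_sqrt (mul_pos ha hab).le
  have hpos : ∀ φ, 0 < a + b * Real.cos φ ^ 2 := by
    intro φ
    rcases le_or_gt 0 b with hb | hb
    · nlinarith [sq_nonneg (Real.cos φ)]
    · nlinarith [Real.cos_sq_le_one φ]
  -- Unlike `arctan (√a * tan φ / √(a + b)) / c`, this antiderivative is continuous on all of `ℝ`.
  have hderiv : ∀ φ, HasDerivAt
      (fun φ => (φ - Real.arctan (b * Real.sin φ * Real.cos φ / (a + c + b * Real.cos φ ^ 2))) / c)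
      (1 / (a + b * Real.cos φ ^ 2)) φ := by
    intro φ
    have hD : a + c + b * Real.cos φ ^ 2 ≠ 0 := by linarith [hpos φ]
    have hu := (((Real.hasDerivAt_sin φ).const_mul b).fun_mul (Real.hasDerivAt_cos φ)).fun_div
      (((Real.hasDerivAt_cos φ).fun_pow 2).const_mul b |>.const_add (a + c)) hD
    refine (((hasDerivAt_id' φ).fun_sub hu.arctan).div_const c).congr_deriv ?_
    have hE := (hpos φ).ne'
    field_simp
    rw [Real.sin_sq]
    linear_combination (-(a + b * Real.cos φ ^ 2 + c)) * hc2
  rw [integral_eq_sub_of_hasDerivAt (fun φ _ => hderiv φ)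
    ((continuous_const.div (by fun_prop) fun φ => (hpos φ).ne').intervalIntegrable _ _)]
  simp

theorem tendsto_intervalIntegral_geom_sum {z : ℝ → ℂ} {a b δ : ℝ} (hz : Continuous z)
    (hδ : 0 < δ) (hsep : ∀ x, δ ≤ ‖1 - z x‖) (hlt : ∀ᵐ x, ‖z x‖ < 1) :
    Tendsto (fun N => ∫ x in a..b, ∑ ℓ ∈ range N, z x ^ ℓ) atTop
      (𝓝 (∫ x in a..b, (1 - z x)⁻¹)) := by
  refine tendsto_integral_filter_of_dominated_convergence (fun _ => 2 / δ)
    (Eventually.of_forall fun N => (by fun_prop : Continuous _).aestronglyMeasurable) ?_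
    intervalIntegrable_const ?_
  · refine Eventually.of_forall fun N => ?_
    filter_upwards [hlt] with x hx _
    have hz1 : z x ≠ 1 := fun h => by simp [h] at hx
    rw [geom_sum_eq hz1, norm_div, norm_sub_rev (z x), norm_sub_rev (z x ^ N)]
    gcongr
    · calc ‖1 - z x ^ N‖ ≤ ‖(1 : ℂ)‖ + ‖z x ^ N‖ := norm_sub_le _ _
        _ ≤ 2 := by
          rw [norm_one, norm_pow]
          linarith [pow_le_one₀ (norm_nonneg _) hx.le (n := N)]
    · exact hsep x
  · filter_upwards [hlt] with x hx _
    exact (hasSum_geometric_of_norm_lt_one hx).tendsto_sum_nat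

noncomputable def laplaceBase (s φ : ℝ) : ℂ := s + (√(1 - s ^ 2) * Real.cos φ : ℝ) * I

@[simp]
theorem laplaceBase_re (s φ : ℝ) : (laplaceBase s φ).re = s := by
  simp [laplaceBase]

@[simp]
theorem laplaceBase_im (s φ : ℝ) : (laplaceBase s φ).im = √(1 - s ^ 2) * Real.cos φ := by
  simp [laplaceBase, Complex.cos_ofReal_re]

theorem continuous_laplaceBase (s : ℝ) : Continuous (laplaceBase s) := by
  unfold laplaceBase
  fun_prop

theorem laplaceBase_eq_mul {s : ℝ} (hs : s ∈ Set.Icc (-1) 1) (φ : ℝ) :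
    laplaceBase s φ = (√((1 + s) / 2) + √((1 - s) / 2) * I * exp (φ * I)) *
      (√((1 + s) / 2) + √((1 - s) / 2) * I * exp (-(φ * I))) := by
  obtain ⟨hs₁, hs₂⟩ := hs
  have hα : √((1 - s) / 2) ^ 2 = (1 - s) / 2 := Real.sq_sqrt (by linarith)
  have hβ : √((1 + s) / 2) ^ 2 = (1 + s) / 2 := Real.sq_sqrt (by linarith)
  have hαβ : √(1 - s ^ 2) = 2 * √((1 - s) / 2) * √((1 + s) / 2) := by
    rw [← Real.sqrt_sq (by positivity : 0 ≤ 2 * √((1 - s) / 2) * √((1 + s) / 2))]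
    congr 1
    linear_combination (-4 * √((1 + s) / 2) ^ 2) * hα - (2 - 2 * s) * hβ
  have hcos : Complex.cos φ * 2 = exp (φ * I) + exp (-(φ * I)) := by
    rw [mul_comm, Complex.two_cos, neg_mul]
  have hexp : exp (φ * I) * exp (-(φ * I)) = 1 := by rw [← Complex.exp_add]; simp
  have hαC : ((√((1 - s) / 2) : ℝ) : ℂ) ^ 2 = (1 - s) / 2 := by exact_mod_cast hα
  have hβC : ((√((1 + s) / 2) : ℝ) : ℂ) ^ 2 = (1 + s) / 2 := by exact_mod_cast hβ
  rw [laplaceBase, hαβ]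
  push_cast
  linear_combination (√((1 - s) / 2) * √((1 + s) / 2) * I) * hcos - hβC + hαC
    - (√((1 - s) / 2) : ℂ) ^ 2 * I ^ 2 * hexp - (√((1 - s) / 2) : ℂ) ^ 2 * Complex.I_sq

theorem integral_laplaceBase_pow {s : ℝ} (hs : s ∈ Set.Icc (-1) 1) (ℓ : ℕ) :
    ∫ φ in (0 : ℝ)..2 * π, laplaceBase s φ ^ ℓ = 2 * π * legendreP ℓ s := by
  have hα : (((√((1 - s) / 2) : ℝ) : ℂ) * I) ^ 2 = (s - 1) / 2 := by
    rw [mul_pow, ← Complex.ofReal_pow, Real.sq_sqrt (by linarith [hs.2]), Complex.I_sq]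
    push_cast
    ring
  have hβ : ((√((1 + s) / 2) : ℝ) : ℂ) ^ 2 = (s + 1) / 2 := by
    rw [← Complex.ofReal_pow, Real.sq_sqrt (by linarith [hs.1])]
    push_cast
    ring
  simp_rw [laplaceBase_eq_mul hs, integral_add_mul_exp_mul_add_mul_exp_neg_pow, hα, hβ,
    legendreP_eq_sum_choose_sq]
  push_cast
  rfl

theorem norm_laplaceBase_lt_one {s φ : ℝ} (hs : s ∈ Set.Ioo (-1) 1) (hφ : Real.sin φ ≠ 0) :
    ‖laplaceBase s φ‖ < 1 := by
  obtain ⟨hs₁, hs₂⟩ := hs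
  have hsq : √(1 - s ^ 2) ^ 2 = 1 - s ^ 2 := Real.sq_sqrt (by nlinarith)
  rw [← sq_lt_one_iff₀ (norm_nonneg _), Complex.sq_norm, Complex.normSq_apply, laplaceBase_re,
    laplaceBase_im]
  calc s * s + √(1 - s ^ 2) * Real.cos φ * (√(1 - s ^ 2) * Real.cos φ)
      = 1 - (1 - s ^ 2) * Real.sin φ ^ 2 := by
        linear_combination Real.cos φ ^ 2 * hsq + (1 - s ^ 2) * Real.sin_sq_add_cos_sq φ
    _ < 1 := sub_lt_self _ (mul_pos (by nlinarith) (by positivity))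

theorem ae_norm_laplaceBase_lt_one {s : ℝ} (hs : s ∈ Set.Ioo (-1) 1) :
    ∀ᵐ φ : ℝ, ‖laplaceBase s φ‖ < 1 := by
  have hzeros : {φ : ℝ | Real.sin φ = 0}.Countable :=
    (Set.countable_range fun n : ℤ => n * π).mono fun φ hφ => Real.sin_eq_zero_iff.mp hφ
  filter_upwards [hzeros.measure_zero volume |> measure_eq_zero_iff_ae_notMem.mp] with φ hφ
  exact norm_laplaceBase_lt_one hs hφ

theorem sub_le_norm_one_sub_laplaceBase (s φ : ℝ) : 1 - s ≤ ‖1 - laplaceBase s φ‖ := by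
  simpa using Complex.re_le_norm (1 - laplaceBase s φ)

theorem re_inv_one_sub_laplaceBase {s : ℝ} (hs : s ∈ Set.Ioo (-1) 1) (φ : ℝ) :
    ((1 - laplaceBase s φ)⁻¹).re = 1 / ((1 - s) + (1 + s) * Real.cos φ ^ 2) := by
  obtain ⟨hs₁, hs₂⟩ := hs
  have hsq : √(1 - s ^ 2) ^ 2 = 1 - s ^ 2 := Real.sq_sqrt (by nlinarith)
  have hnormSq : Complex.normSq (1 - laplaceBase s φ) =
      (1 - s) * ((1 - s) + (1 + s) * Real.cos φ ^ 2) := by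
    rw [Complex.normSq_apply]
    simp only [Complex.sub_re, Complex.one_re, laplaceBase_re, Complex.sub_im, Complex.one_im,
      laplaceBase_im]
    linear_combination Real.cos φ ^ 2 * hsq
  rw [Complex.inv_re, hnormSq, Complex.sub_re, Complex.one_re, laplaceBase_re,
    div_mul_cancel_left₀ (by linarith), one_div]

theorem ofReal_sum_legendreP_eq_integral {s : ℝ} (hs : s ∈ Set.Icc (-1) 1) (N : ℕ) :
    ((∑ ℓ ∈ range N, legendreP ℓ s : ℝ) : ℂ) =
      (((2 * π)⁻¹ : ℝ) : ℂ) * ∫ φ in (0 : ℝ)..2 * π, ∑ ℓ ∈ range N, laplaceBase s φ ^ ℓ := by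
  rw [integral_finsetSum (f := fun ℓ φ => laplaceBase s φ ^ ℓ)
    fun ℓ _ => ((continuous_laplaceBase s).pow ℓ).intervalIntegrable _ _]
  have hπ : (π : ℂ) ≠ 0 := Complex.ofReal_ne_zero.mpr Real.pi_ne_zero
  simp_rw [integral_laplaceBase_pow hs, ← mul_sum]
  push_cast
  field_simp

theorem re_integral_inv_one_sub_laplaceBase {s : ℝ} (hs : s ∈ Set.Ioo (-1) 1) :
    (∫ φ in (0 : ℝ)..2 * π, (1 - laplaceBase s φ)⁻¹).re = 2 * π / √(2 - 2 * s) := by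
  have hne : ∀ φ, 1 - laplaceBase s φ ≠ 0 := fun φ h => by
    linarith [hs.2, sub_le_norm_one_sub_laplaceBase s φ, norm_eq_zero.mpr h]
  have hcont : Continuous fun φ => (1 - laplaceBase s φ)⁻¹ :=
    (continuous_const.sub (continuous_laplaceBase s)).inv₀ hne
  rw [← RCLike.re_to_complex, ← intervalIntegral_re (hcont.intervalIntegrable _ _)]
  simp_rw [RCLike.re_to_complex, re_inv_one_sub_laplaceBase hs]
  rw [integral_one_div_add_mul_cos_sq (by linarith [hs.2]) (by linarith [hs.1])]
  ring_nf

/-- For every `s ∈ (−1,1)` the series `Σ_{ℓ≥0} P_ℓ(s)` converges, with sum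
`1/√(2 − 2s)` (boundary value `t = 1` of the Legendre generating function). -/
theorem stmt_13 :
    ∀ s ∈ Set.Ioo (-1 : ℝ) 1,
      Filter.Tendsto (fun N => ∑ ℓ ∈ Finset.range N, legendreP ℓ s)
        Filter.atTop (nhds (1 / Real.sqrt (2 - 2 * s))) := by
  intro s hs
  have hlimit := tendsto_intervalIntegral_geom_sum (a := 0) (b := 2 * π)
    (continuous_laplaceBase s) (sub_pos.mpr hs.2) (sub_le_norm_one_sub_laplaceBase s)
    (ae_norm_laplaceBase_lt_one hs)
  have hre := (Complex.continuous_re.tendsto _).comp (hlimit.const_mul (((2 * π)⁻¹ : ℝ) : ℂ))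
  simp only [Function.comp_def, ← ofReal_sum_legendreP_eq_integral (Set.Ioo_subset_Icc_self hs),
    Complex.ofReal_re] at hre
  rwa [Complex.re_ofReal_mul, re_integral_inv_one_sub_laplaceBase hs, ← div_eq_inv_mul,
    div_div_cancel_left' (by positivity), ← one_div] at hre
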